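/- Let (Ω, Σ, μ) be a σ-finite measure space, Φ₁, Φ₂ Young functions, and φ: Ω → Ω a surjective nonsingular measurable transformation with Radon–Nikodym derivative h = d(μ∘φ⁻¹)/dμ. If the composition operator C_φ(f) = f∘φ is bounded from L^{Φ₁}(μ) to L^{Φ₂}(μ), then the Orlicz space L^{Φ₁}(μ) embeds continuously into the weighted Orlicz space L_h^{Φ₂}(μ) = {f : ∃ k>0, ∫_Ω h·Φ₂(k|f|) dμ < ∞} with weighted norm N_{Φ₂,h}(f) = inf{k>0 : ∫ h Φ₂(|f|/k) dμ ≤ 1}; indeed N_{Φ₂,h}(f) ≤ ‖C_φ‖ N_{Φ₁}(f) for all f ∈ L^{Φ₁}(μ). -/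

import Mathlib

open MeasureTheory Filter Set
open scoped ENNReal

/-- A Young function: continuous, convex on `[0,∞)`, nonnegative, vanishing exactly at `0`,
tending to `∞` and superlinear at `∞`. -/
def IsYoung (Φ : ℝ → ℝ) : Prop :=
  Continuous Φ ∧ ConvexOn ℝ (Ici 0) Φ ∧ (∀ x, 0 ≤ Φ x) ∧
  (∀ x, 0 ≤ x → (Φ x = 0 ↔ x = 0)) ∧
  Tendsto Φ atTop atTop ∧ Tendsto (fun x => Φ x / x) atTop atTop

/-- The Orlicz modular `∫ Φ(|f|) dμ` (as an extended real). -/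
noncomputable def orliczModular {Ω : Type*} [MeasurableSpace Ω] (Φ : ℝ → ℝ)
    (μ : Measure Ω) (f : Ω → ℂ) : ℝ≥0∞ :=
  ∫⁻ x, ENNReal.ofReal (Φ (‖f x‖)) ∂μ

/-- Membership in the Orlicz space `L^Φ(μ)`. -/
def MemOrlicz {Ω : Type*} [MeasurableSpace Ω] (Φ : ℝ → ℝ) (μ : Measure Ω)
    (f : Ω → ℂ) : Prop :=
  Measurable f ∧ ∃ k : ℝ, 0 < k ∧ orliczModular Φ μ (fun x => (k : ℂ) * f x) < ⊤

/-- The Luxemburg norm `N_Φ(f) = inf {k > 0 : ∫ Φ(|f|/k) dμ ≤ 1}`. -/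
noncomputable def luxNorm {Ω : Type*} [MeasurableSpace Ω] (Φ : ℝ → ℝ)
    (μ : Measure Ω) (f : Ω → ℂ) : ℝ :=
  sInf {k : ℝ | 0 < k ∧ orliczModular Φ μ (fun x => f x / (k : ℂ)) ≤ 1}

/-- An atom of the measure `μ`. -/
def IsMeasAtom {Ω : Type*} [MeasurableSpace Ω] (μ : Measure Ω) (A : Set Ω) : Prop :=
  MeasurableSet A ∧ 0 < μ A ∧ ∀ F, F ⊆ A → MeasurableSet F → μ F = 0 ∨ μ F = μ A

/-- `N` is a union of finitely many atoms of `μ`. -/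
def FinUnionAtoms {Ω : Type*} [MeasurableSpace Ω] (μ : Measure Ω) (N : Set Ω) : Prop :=
  ∃ (n : ℕ) (C : Fin n → Set Ω), (∀ i, IsMeasAtom μ (C i)) ∧ N = ⋃ i, C i

/-- Sequential compactness of an operator `T` between the Orlicz spaces
`L^{Φ₁}(μ)` and `L^{Φ₂}(μ)`: the image of the unit ball is totally bounded,
expressed via extraction of Cauchy subsequences. -/
def CompactOp {Ω : Type*} [MeasurableSpace Ω] (Φ₁ Φ₂ : ℝ → ℝ) (μ : Measure Ω)
    (T : (Ω → ℂ) → (Ω → ℂ)) : Prop :=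
  ∀ f : ℕ → Ω → ℂ, (∀ n, MemOrlicz Φ₁ μ (f n) ∧ luxNorm Φ₁ μ (f n) ≤ 1) →
    ∃ g : ℕ → ℕ, StrictMono g ∧
      ∀ ε : ℝ, 0 < ε → ∃ N : ℕ, ∀ m, N ≤ m → ∀ n, N ≤ n →
        luxNorm Φ₂ μ (fun x => T (f (g m)) x - T (f (g n)) x) ≤ ε

/-- Boundedness of `C_φ : L^{Φ₁} → L^{Φ₂}` implies the continuous embedding of
`L^{Φ₁}(μ)` into the weighted Orlicz space `L_h^{Φ₂}(μ)`. -/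
theorem stmt0 {Ω : Type*} [MeasurableSpace Ω] (μ : Measure Ω) [SigmaFinite μ]
    (Φ₁ Φ₂ : ℝ → ℝ) (hΦ₁ : IsYoung Φ₁) (hΦ₂ : IsYoung Φ₂)
    (φ : Ω → Ω) (hφ : Measurable φ) (hsurj : Function.Surjective φ)
    (hns : ∀ A : Set Ω, MeasurableSet A → μ A = 0 → μ (φ ⁻¹' A) = 0)
    (h : Ω → ℝ) (hh : Measurable h) (hh0 : ∀ x, 0 ≤ h x)
    (hRN : ∀ A : Set Ω, MeasurableSet A →
      μ (φ ⁻¹' A) = ∫⁻ x in A, ENNReal.ofReal (h x) ∂μ)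
    (C : ℝ) (hC : 0 ≤ C)
    (hbdd : ∀ f : Ω → ℂ, MemOrlicz Φ₁ μ f →
      MemOrlicz Φ₂ μ (f ∘ φ) ∧ luxNorm Φ₂ μ (f ∘ φ) ≤ C * luxNorm Φ₁ μ f) :
    ∀ f : Ω → ℂ, MemOrlicz Φ₁ μ f →
      (∃ k : ℝ, 0 < k ∧
        ∫⁻ x, ENNReal.ofReal (h x * Φ₂ (k * ‖f x‖)) ∂μ < ⊤) ∧
      sInf {k : ℝ | 0 < k ∧
          ∫⁻ x, ENNReal.ofReal (h x * Φ₂ (‖f x‖ / k)) ∂μ ≤ 1}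
        ≤ C * luxNorm Φ₁ μ f := by
  have hmap : μ.map φ = μ.withDensity (fun x => ENNReal.ofReal (h x)) := by
    ext A hA
    rw [Measure.map_apply hφ hA, hRN A hA, withDensity_apply _ hA]
  have key : ∀ g : Ω → ℂ, Measurable g →
      orliczModular Φ₂ μ (g ∘ φ) =
        ∫⁻ x, ENNReal.ofReal (h x * Φ₂ (‖g x‖)) ∂μ := by
    intro g hg
    have habs : Measurable fun x => ‖g x‖ := by
      simpa using hg.norm
    have hmeas : Measurable fun x => ENNReal.ofReal (Φ₂ (‖g x‖)) :=
      ENNReal.measurable_ofReal.comp (hΦ₂.1.measurable.comp habs)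
    calc orliczModular Φ₂ μ (g ∘ φ)
        = ∫⁻ x, ENNReal.ofReal (Φ₂ (‖g x‖)) ∂(μ.map φ) := by
          rw [lintegral_map hmeas hφ]; rfl
      _ = ∫⁻ x, ENNReal.ofReal (h x) * ENNReal.ofReal (Φ₂ (‖g x‖)) ∂μ := by
          rw [hmap, lintegral_withDensity_eq_lintegral_mul _
            (hh.ennreal_ofReal) hmeas]; rfl
      _ = ∫⁻ x, ENNReal.ofReal (h x * Φ₂ (‖g x‖)) ∂μ := by
          congr 1; ext x; rw [ENNReal.ofReal_mul (hh0 x)]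
  intro f hf
  obtain ⟨hCφ, hnorm⟩ := hbdd f hf
  constructor
  · obtain ⟨hmeas2, k, hk, hfin⟩ := hCφ
    refine ⟨k, hk, ?_⟩
    have hkm : Measurable fun x => (k : ℂ) * f x := (measurable_const.mul hf.1)
    have := key (fun x => (k : ℂ) * f x) hkm
    have heq : (fun x => (k : ℂ) * (f ∘ φ) x) = (fun x => (k : ℂ) * f x) ∘ φ := rfl
    rw [heq, this] at hfin
    have habs : ∀ x, ‖(k : ℂ) * f x‖ = k * ‖f x‖ := by
      intro x
      rw [norm_mul, Complex.norm_real, Real.norm_eq_abs, abs_of_pos hk]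
    calc ∫⁻ x, ENNReal.ofReal (h x * Φ₂ (k * ‖f x‖)) ∂μ
        = ∫⁻ x, ENNReal.ofReal (h x * Φ₂ (‖(k : ℂ) * f x‖)) ∂μ := by
          congr 1; ext x; rw [habs x]
      _ < ⊤ := hfin
  · have hset : {k : ℝ | 0 < k ∧
        ∫⁻ x, ENNReal.ofReal (h x * Φ₂ (‖f x‖ / k)) ∂μ ≤ 1} =
        {k : ℝ | 0 < k ∧ orliczModular Φ₂ μ (fun x => (f ∘ φ) x / (k : ℂ)) ≤ 1} := by
      ext k
      simp only [mem_setOf_eq]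
      constructor
      · rintro ⟨hk, hle⟩
        refine ⟨hk, ?_⟩
        have hkm : Measurable fun x => f x / (k : ℂ) := hf.1.div measurable_const
        have heq : (fun x => (f ∘ φ) x / (k : ℂ)) = (fun x => f x / (k : ℂ)) ∘ φ := rfl
        rw [heq, key _ hkm]
        calc ∫⁻ x, ENNReal.ofReal (h x * Φ₂ (‖f x / (k : ℂ)‖)) ∂μ
            = ∫⁻ x, ENNReal.ofReal (h x * Φ₂ (‖f x‖ / k)) ∂μ := by
              congr 1; ext x
              rw [norm_div, Complex.norm_real, Real.norm_eq_abs, abs_of_pos hk]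
          _ ≤ 1 := hle
      · rintro ⟨hk, hle⟩
        refine ⟨hk, ?_⟩
        have hkm : Measurable fun x => f x / (k : ℂ) := hf.1.div measurable_const
        have heq : (fun x => (f ∘ φ) x / (k : ℂ)) = (fun x => f x / (k : ℂ)) ∘ φ := rfl
        rw [heq, key _ hkm] at hle
        calc ∫⁻ x, ENNReal.ofReal (h x * Φ₂ (‖f x‖ / k)) ∂μ
            = ∫⁻ x, ENNReal.ofReal (h x * Φ₂ (‖f x / (k : ℂ)‖)) ∂μ := by
              congr 1; ext x
              rw [norm_div, Complex.norm_real, Real.norm_eq_abs, abs_of_pos hk]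
          _ ≤ 1 := hle
    rw [hset]
    exact hnorm
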